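/- The Petersen graph is isomorphic to the generalized Petersen graph G(5,2), and G(5,2) satisfies gcd(5,2) = 1 with 2⁴ ≡ 1 (mod 5); consequently the Petersen graph is an induced subgraph of the Cayley graph of the group C₅ ⋊ C₄ of order 20 (with action b ↦ b²) with respect to the minimal generating set {a, b}. -/

import Mathlib

/-- The Cayley graph of a group `Γ` with connection set `S`. -/
def cayley {Γ : Type*} [Group Γ] (S : Set Γ) : SimpleGraph Γ where
  Adj x y := x ≠ y ∧ (x⁻¹ * y ∈ S ∨ y⁻¹ * x ∈ S)
  symm := by
    constructor
    rintro x y ⟨hxy, h⟩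
    exact ⟨hxy.symm, h.symm⟩
  loopless := by constructor; rintro x ⟨hx, -⟩; exact hx rfl

/-- The group homomorphism `AddAut A →* MulAut (Multiplicative A)`. -/
def addAutToMulAut (A : Type*) [AddGroup A] :
    Multiplicative (AddAut A) →* MulAut (Multiplicative A) where
  toFun e := AddEquiv.toMultiplicative (Multiplicative.toAdd e)
  map_one' := rfl
  map_mul' _ _ := rfl

/-- The action of `C_r` on `C_n` sending the generator of `C_r` to multiplication
by `k` on `C_n = ZMod n` (written additively), i.e. to `x ↦ x^k` multiplicatively.
This is well defined since `gcd(k,n) = 1` and `k^r ≡ 1 (mod n)`. -/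
noncomputable def semiAct (n r k : ℕ) (h : Nat.Coprime k n) (hk : k ^ r ≡ 1 [MOD n]) :
    Multiplicative (ZMod r) →* MulAut (Multiplicative (ZMod n)) :=
  AddMonoidHom.toMultiplicativeLeft
    (ZMod.lift r ⟨zmultiplesHom _
      (Additive.ofMul (addAutToMulAut (ZMod n) (AddAut.mulLeft (ZMod.unitOfCoprime k h)))), by
        have hu : (ZMod.unitOfCoprime k h) ^ r = 1 := by
          ext
          push_cast
          have : ((k : ZMod n)) ^ r = ((1 : ℕ) : ZMod n) := by
            rw [← Nat.cast_pow, ZMod.natCast_eq_natCast_iff]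
            exact hk
          simpa using this
        simp only [zmultiplesHom_apply]
        rw [← ofMul_zpow, ← map_zpow, ← map_zpow]
        norm_cast
        rw [hu]
        simp ⟩)

/-- The semidirect product `C_n ⋊ C_r` where the generator `a` of `C_r` acts on the
generator `b` of `C_n` by `a * b * a⁻¹ = b^k`. -/
noncomputable abbrev SDP (n r k : ℕ) (h : Nat.Coprime k n) (hk : k ^ r ≡ 1 [MOD n]) :=
  SemidirectProduct (Multiplicative (ZMod n)) (Multiplicative (ZMod r)) (semiAct n r k h hk)

/-- The generator `a` (of order `r`) of `C_n ⋊ C_r`. -/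
noncomputable def genA (n r k : ℕ) (h : Nat.Coprime k n) (hk : k ^ r ≡ 1 [MOD n]) :
    SDP n r k h hk :=
  SemidirectProduct.inr (Multiplicative.ofAdd 1)

/-- The generator `b` (of order `n`) of `C_n ⋊ C_r`. -/
noncomputable def genB (n r k : ℕ) (h : Nat.Coprime k n) (hk : k ^ r ≡ 1 [MOD n]) :
    SDP n r k h hk :=
  SemidirectProduct.inl (Multiplicative.ofAdd 1)

/-- The generalized Petersen graph `G(n,k)`: vertices `Sum.inl i` are the outer
vertices `uᵢ` and vertices `Sum.inr i` are the inner vertices `vᵢ` (indices mod `n`);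
edges are `uᵢuᵢ₊₁`, `vᵢvᵢ₊ₖ` and the spokes `uᵢvᵢ`. -/
def GPG (n k : ℕ) : SimpleGraph (ZMod n ⊕ ZMod n) where
  Adj x y := x ≠ y ∧
    (match x, y with
     | Sum.inl i, Sum.inl j => j = i + 1 ∨ i = j + 1
     | Sum.inr i, Sum.inr j => j = i + (k : ZMod n) ∨ i = j + (k : ZMod n)
     | Sum.inl i, Sum.inr j => i = j
     | Sum.inr i, Sum.inl j => i = j)
  symm := by
    constructor
    rintro (i | i) (j | j) ⟨hne, h⟩ <;>
      refine ⟨Ne.symm hne, ?_⟩ <;> dsimp only at h ⊢ <;> tauto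
  loopless := by constructor; rintro x ⟨hx, -⟩; exact hx rfl

/-- The map sending the outer vertex `uᵢ` to `bⁱ` and the inner vertex `vᵢ` to `bⁱ * a`
in `C_n ⋊ C_r`. -/
noncomputable def embMap (n r k : ℕ) (h : Nat.Coprime k n) (hk : k ^ r ≡ 1 [MOD n]) :
    ZMod n ⊕ ZMod n → SDP n r k h hk
  | Sum.inl i => genB n r k h hk ^ i.val
  | Sum.inr i => genB n r k h hk ^ i.val * genA n r k h hk

/-- The Petersen graph: vertices are the `2`-element subsets of a `5`-element set, with
disjoint pairs adjacent (the Kneser graph `K(5,2)`). -/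
def petersen : SimpleGraph {t : Finset (Fin 5) // t.card = 2} where
  Adj x y := Disjoint x.1 y.1
  symm := by constructor; rintro x y hxy; exact hxy.symm
  loopless := by
    constructor
    rintro ⟨x, hx⟩ h
    simp only [disjoint_self, Finset.bot_eq_empty] at h
    simp [h] at hx

/-!
In `Cₙ ⋊ Cᵣ` write `x = (bⁱ, aˢ)`. Then `x⁻¹ y = b` exactly when `x` and `y` have the same
`a`-component `aˢ` and their `b`-components differ by `aˢ b a⁻ˢ`, and `x⁻¹ y = a` exactly when
the `b`-components agree and the `a`-components differ by `a`. For `uᵢ = bⁱ` and `vᵢ = bⁱ a`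
this produces the outer cycle, the spokes and, because `a b a⁻¹ = bᵏ`, the inner edges
`vᵢ vᵢ₊ₖ` and nothing else as soon as `a ≠ 1`: `G(n,k)` is an induced subgraph of the Cayley
graph for all such `n, r, k`. The Petersen graph is matched with `G(5,2)` by a finite check.
-/

open SemidirectProduct Multiplicative

namespace SemidirectProduct

variable {N G : Type*} [Group N] [Group G] {φ : G →* MulAut N}

theorem inv_mul_eq_inl_iff (x y : N ⋊[φ] G) (a : N) :
    x⁻¹ * y = inl a ↔ y.left = x.left * φ x.right a ∧ y.right = x.right := by
  rw [inv_mul_eq_iff_eq_mul, SemidirectProduct.ext_iff]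
  simp

theorem inv_mul_eq_inr_iff (x y : N ⋊[φ] G) (g : G) :
    x⁻¹ * y = inr g ↔ y.left = x.left ∧ y.right = x.right * g := by
  rw [inv_mul_eq_iff_eq_mul, SemidirectProduct.ext_iff]
  simp

end SemidirectProduct

section CyclicBySemidirect

variable {n r k : ℕ} {h : Nat.Coprime k n} {hk : k ^ r ≡ 1 [MOD n]}

theorem semiAct_ofAdd_one_apply (m : ZMod n) :
    semiAct n r k h hk (ofAdd 1) (ofAdd m) = ofAdd (k * m) := by
  rw [← Int.cast_one (R := ZMod r)]
  unfold semiAct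
  rw [AddMonoidHom.toMultiplicativeLeft_apply_apply, toAdd_ofAdd, ZMod.lift_coe]
  rfl

theorem genA_zpow (z : ℤ) : genA n r k h hk ^ z = inr (ofAdd (z : ZMod r)) := by
  rw [genA, ← map_zpow, ← ofAdd_zsmul, zsmul_one]

theorem genB_zpow (z : ℤ) : genB n r k h hk ^ z = inl (ofAdd (z : ZMod n)) := by
  rw [genB, ← map_zpow, ← ofAdd_zsmul, zsmul_one]

theorem genB_pow (m : ℕ) : genB n r k h hk ^ m = inl (ofAdd (m : ZMod n)) := by
  rw [genB, ← map_pow, ← ofAdd_nsmul, nsmul_one]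

theorem nat_card_SDP : Nat.card (SDP n r k h hk) = n * r := by
  rw [SemidirectProduct.card, Nat.card_congr toAdd, Nat.card_congr toAdd, Nat.card_zmod,
    Nat.card_zmod]

theorem closure_genA_genB_eq_top :
    Subgroup.closure {genA n r k h hk, genB n r k h hk} = ⊤ := by
  refine eq_top_iff.2 fun x _ => ?_
  obtain ⟨a, ha⟩ := ZMod.intCast_surjective (toAdd x.left)
  obtain ⟨g, hg⟩ := ZMod.intCast_surjective (toAdd x.right)
  rw [← inl_left_mul_inr_right x, ← ofAdd_toAdd x.left, ← ofAdd_toAdd x.right, ← ha, ← hg,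
    ← genA_zpow, ← genB_zpow]
  exact mul_mem (zpow_mem (Subgroup.subset_closure (by simp)) _)
    (zpow_mem (Subgroup.subset_closure (by simp)) _)

theorem closure_genA_ne_top (hn : n ≠ 1) : Subgroup.closure {genA n r k h hk} ≠ ⊤ := by
  have : Nontrivial (ZMod n) := ZMod.nontrivial_iff.2 hn
  have hle : Subgroup.closure {genA n r k h hk} ≤ inr.range := by
    simpa [Subgroup.closure_le] using ⟨_, rfl⟩
  refine fun htop => ?_
  obtain ⟨g, hg⟩ := hle (htop ▸ Subgroup.mem_top (genB n r k h hk))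
  simpa [genB] using (congrArg left hg).symm

theorem closure_genB_ne_top (hr : r ≠ 1) : Subgroup.closure {genB n r k h hk} ≠ ⊤ := by
  have : Nontrivial (ZMod r) := ZMod.nontrivial_iff.2 hr
  have hle : Subgroup.closure {genB n r k h hk} ≤ inl.range := by
    simpa [Subgroup.closure_le] using ⟨_, rfl⟩
  refine fun htop => ?_
  obtain ⟨g, hg⟩ := hle (htop ▸ Subgroup.mem_top (genA n r k h hk))
  simpa [genA] using (congrArg right hg).symm

end CyclicBySemidirect

section Embedding

variable {n r k : ℕ} [NeZero n] {h : Nat.Coprime k n} {hk : k ^ r ≡ 1 [MOD n]}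

@[simp]
theorem embMap_inl (i : ZMod n) : embMap n r k h hk (Sum.inl i) = inl (ofAdd i) := by
  rw [embMap, genB_pow, ZMod.natCast_zmod_val]

@[simp]
theorem embMap_inr (i : ZMod n) :
    embMap n r k h hk (Sum.inr i) = inl (ofAdd i) * inr (ofAdd 1) := by
  rw [embMap, genB_pow, ZMod.natCast_zmod_val, genA]

variable (hr : r ≠ 1)
include hr

theorem embMap_injective : Function.Injective (embMap n r k h hk) := by
  have : Nontrivial (ZMod r) := ZMod.nontrivial_iff.2 hr
  rintro (i | i) (j | j) hij <;>
    simp_all [SemidirectProduct.ext_iff, eq_comm (a := (1 : Multiplicative (ZMod r)))]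

theorem cayley_adj_embMap_iff (x y : ZMod n ⊕ ZMod n) :
    (cayley {genA n r k h hk, genB n r k h hk}).Adj (embMap n r k h hk x)
      (embMap n r k h hk y) ↔ (GPG n k).Adj x y := by
  have : Nontrivial (ZMod r) := ZMod.nontrivial_iff.2 hr
  simp only [cayley, GPG, (embMap_injective hr).ne_iff, Set.mem_insert_iff,
    Set.mem_singleton_iff, genA, genB, inv_mul_eq_inl_iff, inv_mul_eq_inr_iff]
  rcases x with i | i <;> rcases y with j | j <;>
    simp +contextual [semiAct_ofAdd_one_apply, ← ofAdd_add,
      eq_comm (a := (1 : Multiplicative (ZMod r))), eq_comm (a := j)]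

end Embedding

noncomputable def gpgEmbeddingCayley {n r k : ℕ} [NeZero n] (h : Nat.Coprime k n)
    (hk : k ^ r ≡ 1 [MOD n]) (hr : r ≠ 1) :
    GPG n k ↪g cayley {genA n r k h hk, genB n r k h hk} :=
  ⟨⟨embMap n r k h hk, embMap_injective hr⟩, cayley_adj_embMap_iff hr _ _⟩

instance (n k : ℕ) : DecidableRel (GPG n k).Adj := fun x y => by
  unfold GPG; cases x <;> cases y <;> infer_instance

instance : DecidableRel petersen.Adj := fun x y => inferInstanceAs (Decidable (Disjoint x.1 y.1))

def gpgFiveTwoToPetersen : ZMod 5 ⊕ ZMod 5 → {t : Finset (Fin 5) // t.card = 2}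
  | Sum.inl i => ⟨{i, i + 2}, by revert i; decide⟩
  | Sum.inr i => ⟨{i + 3, i + 4}, by revert i; decide⟩

noncomputable def petersenIsoGPG : petersen ≃g GPG 5 2 :=
  SimpleGraph.Iso.symm
    ⟨Equiv.ofBijective gpgFiveTwoToPetersen (by decide), fun {x y} => by revert x y; decide⟩

theorem stmt18 :
    ∃ (h : Nat.Coprime 5 2) (hk : 2 ^ 4 ≡ 1 [MOD 5]),
      Nonempty (petersen ≃g GPG 5 2) ∧
      Nat.card (SDP 5 4 2 h.symm hk) = 20 ∧
      Subgroup.closure {genA 5 4 2 h.symm hk, genB 5 4 2 h.symm hk} = ⊤ ∧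
      Subgroup.closure {genA 5 4 2 h.symm hk} ≠ ⊤ ∧
      Subgroup.closure {genB 5 4 2 h.symm hk} ≠ ⊤ ∧
      Nonempty (petersen ≃g
        ((cayley {genA 5 4 2 h.symm hk, genB 5 4 2 h.symm hk}).induce
          (Set.range (embMap 5 4 2 h.symm hk)))) := by
  have h : Nat.Coprime 5 2 := by decide
  have hk : 2 ^ 4 ≡ 1 [MOD 5] := by decide
  refine ⟨h, hk, ⟨petersenIsoGPG⟩, nat_card_SDP, closure_genA_genB_eq_top,
    closure_genA_ne_top (by decide), closure_genB_ne_top (by decide), ⟨?_⟩⟩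
  exact petersenIsoGPG.trans (gpgEmbeddingCayley h.symm hk (by decide)).isoInduceRange
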